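/- Exponential form of the random-coding error bound: under the stated setup with |W'| ≤ 2^u and index set J = {1,…,v}×K×{1,…,m}, the probability that some competitor's product metric reaches the reference metric is at most 2^{−v(T_v − R_c)}, where R_c := u/v and T_v := |K|·m + (1/v) Σ_{l=1}^v Σ_{k∈K} Σ_{i=1}^m log₂( q_{l,k,i}(b*_{l,k,i}) / (q_{l,k,i}(0) + q_{l,k,i}(1)) ). -/

import Mathlib

/-!
Let `t = ∏ⱼ q_j(b*_j)` and `S = ∏ⱼ (q_j(0) + q_j(1)) = ∑_c ∏ⱼ q_j(c_j)`. By Markov's inequality for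
counting measure, at most `S / t` bit vectors `c` have metric `∏ⱼ q_j(c_j) ≥ t`. Each competitor is
uniform on `2^|J|` vectors, so the union bound over at most `2^u` competitors bounds the probability
by `2^u · (S / t) / 2^|J|`, which is `2^{−v(T_v − R_c)}` once the logarithms are collected.
-/

open MeasureTheory Finset
open scoped ENNReal

theorem card_filter_le_sum_div {α : Type*} [Fintype α] (g : α → ℝ) (hg : ∀ a, 0 ≤ g a)
    {t : ℝ} (ht : 0 < t) : (#{a | t ≤ g a} : ℝ) ≤ (∑ a, g a) / t := by
  rw [le_div_iff₀ ht, ← nsmul_eq_mul]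
  calc #{a | t ≤ g a} • t ≤ ∑ a ∈ {a | t ≤ g a}, g a :=
        card_nsmul_le_sum _ _ _ fun a ha => (mem_filter.1 ha).2
    _ ≤ ∑ a, g a := sum_le_univ_sum_of_nonneg hg

theorem card_filter_le_prod_sum_div {ι κ : Type*} [Fintype ι] [DecidableEq ι] [Fintype κ]
    (q : ι → κ → ℝ) (hq : ∀ j b, 0 ≤ q j b) {t : ℝ} (ht : 0 < t) :
    (#{c : ι → κ | t ≤ ∏ j, q j (c j)} : ℝ) ≤ (∏ j, ∑ b, q j b) / t := by
  rw [Fintype.prod_sum]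
  exact card_filter_le_sum_div _ (fun c => prod_nonneg fun j _ => hq j _) ht

theorem measure_exists_mem_le {Ω W α : Type*} [MeasurableSpace Ω] (μ : Measure Ω) [Fintype W]
    (X : W → Ω → α) (F : Finset α) {p : ℝ≥0∞} (hX : ∀ w, ∀ c ∈ F, μ {ω | X w ω = c} ≤ p) :
    μ {ω | ∃ w, X w ω ∈ F} ≤ Fintype.card W * #F * p := by
  have hunion : {ω | ∃ w, X w ω ∈ F} = ⋃ w, ⋃ c ∈ F, {ω | X w ω = c} := by
    ext ω; simp
  calc μ {ω | ∃ w, X w ω ∈ F} ≤ ∑ w, ∑ c ∈ F, μ {ω | X w ω = c} := by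
        rw [hunion]
        exact (measure_iUnion_fintype_le _ _).trans
          (sum_le_sum fun w _ => measure_biUnion_finset_le _ _)
    _ ≤ ∑ _w : W, ∑ _c ∈ F, p := by gcongr with w _ c hc; exact hX w c hc
    _ = Fintype.card W * #F * p := by simp [mul_assoc]

theorem rpow_neg_mul_add_sub_div {b : ℝ} (hb : 0 < b) {v : ℝ} (hv : v ≠ 0) (d x u : ℝ) :
    b ^ (-v * ((d + 1 / v * x) - u / v)) = b ^ u / b ^ (v * d) / b ^ x := by
  have hexp : -v * ((d + 1 / v * x) - u / v) = u - v * d - x := by field_simp; ring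
  rw [hexp, Real.rpow_sub hb, Real.rpow_sub hb]

theorem random_coding_exponential_bound_general
    {Ω : Type*} [MeasureSpace Ω]
    {v m u : ℕ} (hv : 0 < v)
    {K : Type*} [Fintype K]
    {W' : Type*} [Fintype W'] (hW : Fintype.card W' ≤ 2 ^ u)
    (q : Fin v × K × Fin m → Bool → ℝ)
    (hq : ∀ j b, 0 ≤ q j b)
    (hqsum : ∀ j, 0 < q j false + q j true)
    (bstar : Fin v × K × Fin m → Bool)
    (hbstar : ∀ j, 0 < q j (bstar j))
    (B : W' → Ω → Fin v × K × Fin m → Bool)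
    (hunif : ∀ (w' : W') (c : Fin v × K × Fin m → Bool),
      volume {ω | B w' ω = c} = 1 / 2 ^ (Fintype.card (Fin v × K × Fin m)))
    (Rc Tv : ℝ)
    (hRc : Rc = (u : ℝ) / v)
    (hTv : Tv = (Fintype.card K : ℝ) * m
        + (1 / (v : ℝ)) * ∑ j : Fin v × K × Fin m,
            Real.logb 2 (q j (bstar j) / (q j false + q j true))) :
    (volume {ω | ∃ w', (∏ j, q j (bstar j)) ≤ ∏ j, q j (B w' ω j)}).toReal
      ≤ (2 : ℝ) ^ (-(v : ℝ) * (Tv - Rc)) := by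
  classical
  set n := Fintype.card (Fin v × K × Fin m)
  set t := ∏ j, q j (bstar j)
  set S := ∏ j, (q j false + q j true)
  have ht : 0 < t := prod_pos fun j _ => hbstar j
  have hS : 0 < S := prod_pos fun j _ => hqsum j
  set F : Finset (Fin v × K × Fin m → Bool) := {c | t ≤ ∏ j, q j (c j)}
  have hF : (#F : ℝ) ≤ S / t := by
    simpa only [Fintype.sum_bool, add_comm] using card_filter_le_prod_sum_div q hq ht
  have hP : volume {ω | ∃ w', t ≤ ∏ j, q j (B w' ω j)} ≤ Fintype.card W' * #F * (1 / 2 ^ n) := by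
    simpa [F] using measure_exists_mem_le volume B F fun w c _ => (hunif w c).le
  have hlog : ∑ j, Real.logb 2 (q j (bstar j) / (q j false + q j true)) = Real.logb 2 (t / S) := by
    rw [← Real.logb_prod _ _ fun j _ => (div_pos (hbstar j) (hqsum j)).ne', prod_div_distrib]
  have hn : (v : ℝ) * (Fintype.card K * m) = n := by simp [n, Fintype.card_prod]
  calc _ ≤ (Fintype.card W' : ℝ) * #F / 2 ^ n := by
        refine (ENNReal.toReal_mono (by simp [ENNReal.mul_eq_top]) hP).trans_eq ?_
        simp [div_eq_mul_inv]
    _ ≤ 2 ^ u * (S / t) / 2 ^ n := by gcongr; exact_mod_cast hW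
    _ = _ := by
        rw [hTv, hRc, hlog, rpow_neg_mul_add_sub_div two_pos (by positivity), hn,
          Real.rpow_logb two_pos (by norm_num) (div_pos ht hS), Real.rpow_natCast,
          Real.rpow_natCast]
        field_simp

/-- Exponential form of the random-coding error bound: with `|W'| ≤ 2^u` and index set
`J = {1,…,v} × K × {1,…,m}`, the probability that some competitor's product metric reaches
the reference metric is at most `2^{−v(T_v − R_c)}`, where `R_c = u/v` and
`T_v = |K|·m + (1/v) Σ_{l,k,i} log₂(q_{l,k,i}(b*_{l,k,i}) / (q_{l,k,i}(0)+q_{l,k,i}(1)))`. -/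
theorem random_coding_exponential_bound
    {Ω : Type*} [MeasureSpace Ω] [IsProbabilityMeasure (volume : Measure Ω)]
    {v m u : ℕ} (hv : 0 < v) (hm : 0 < m) (hu : 0 < u)
    {K : Type*} [Fintype K] [Nonempty K]
    {W' : Type*} [Fintype W'] (hW : Fintype.card W' ≤ 2 ^ u)
    (q : Fin v × K × Fin m → Bool → ℝ)
    (hq : ∀ j b, 0 ≤ q j b)
    (hqsum : ∀ j, 0 < q j false + q j true)
    (bstar : Fin v × K × Fin m → Bool)
    (hbstar : ∀ j, 0 < q j (bstar j))
    (B : W' → Ω → Fin v × K × Fin m → Bool)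
    (hBm : ∀ w', Measurable (B w'))
    (hunif : ∀ (w' : W') (c : Fin v × K × Fin m → Bool),
      volume {ω | B w' ω = c} = 1 / 2 ^ (Fintype.card (Fin v × K × Fin m)))
    (Rc Tv : ℝ)
    (hRc : Rc = (u : ℝ) / v)
    (hTv : Tv = (Fintype.card K : ℝ) * m
        + (1 / (v : ℝ)) * ∑ j : Fin v × K × Fin m,
            Real.logb 2 (q j (bstar j) / (q j false + q j true))) :
    (volume {ω | ∃ w', (∏ j, q j (bstar j)) ≤ ∏ j, q j (B w' ω j)}).toReal
      ≤ (2 : ℝ) ^ (-(v : ℝ) * (Tv - Rc)) :=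
  random_coding_exponential_bound_general hv hW q hq hqsum bstar hbstar B hunif Rc Tv hRc hTv
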